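/- Let m ≥ 9 and n ≥ 3 be odd integers. Then the lid-chromatic number of the tensor product of the cycles C_m and C_n satisfies χ_lid(C_m × C_n) = 4. -/

import Mathlib

open SimpleGraph
open scoped Fin.NatCast Fin.CommRing

/-- The closed neighborhood of a vertex: the vertex together with its neighbors. -/
def SimpleGraph.closedNbhd {V : Type*} (G : SimpleGraph V) (v : V) : Set V :=
  insert v (G.neighborSet v)

/-- A coloring `f` is a locally identifying coloring of `G` if it is proper and, for every
edge `uw` whose endpoints have distinct closed neighborhoods, the sets of colors appearing
on the two closed neighborhoods are distinct. -/
def SimpleGraph.IsLidColoring {V α : Type*} (G : SimpleGraph V) (f : V → α) : Prop :=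
  (∀ ⦃u w⦄, G.Adj u w → f u ≠ f w) ∧
  (∀ ⦃u w⦄, G.Adj u w → G.closedNbhd u ≠ G.closedNbhd w →
    f '' G.closedNbhd u ≠ f '' G.closedNbhd w)

/-- `G` admits a locally identifying coloring with `k` colors. -/
def SimpleGraph.LidColorable {V : Type*} (G : SimpleGraph V) (k : ℕ) : Prop :=
  ∃ f : V → Fin k, G.IsLidColoring f

/-- The lid-chromatic number of `G`: the least number of colors in a lid-coloring of `G`. -/
noncomputable def SimpleGraph.lidChromaticNumber {V : Type*} (G : SimpleGraph V) : ℕ∞ :=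
  ⨅ k ∈ {k : ℕ | G.LidColorable k}, (k : ℕ∞)

/-- The tensor (categorical/Kronecker) product of two simple graphs. -/
def SimpleGraph.tensorProd {α β : Type*} (G : SimpleGraph α) (H : SimpleGraph β) :
    SimpleGraph (α × β) where
  Adj x y := G.Adj x.1 y.1 ∧ H.Adj x.2 y.2
  symm := ⟨fun _ _ h => ⟨h.1.symm, h.2.symm⟩⟩
  loopless := ⟨fun x h => G.loopless.irrefl x.1 h.1⟩

/-!
Lower bound: along an edge `uw` of a lid-colouring with three colours, the colour sets of `N[u]`
and `N[w]` both contain the two distinct colours of `u` and `w` and differ, so exactly one of them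
is the full set of colours. Hence "sees all three colours" would be a proper 2-colouring of
`C_m × C_n`, whose diagonal `t ↦ (t, t)` is a closed walk of odd length `m * n`.

Upper bound: the closed neighbourhood of `(x, y)` in `C_m × C_n` projects onto that of `x` in
`C_m`, so a lid-colouring `c` of `C_m` lifts to `(x, y) ↦ c x`. For odd `m ≥ 9`, `C_m` is coloured
by repeating the block `0, 1, 0, 2` and closing the cycle with the tail `0, 1, 3, 2, 3` or
`0, 1, 3, 1, 2, 0, 3`, according to `m mod 4`.
-/

lemma Fin.three_eq_univ_iff_ne_univ {S T : Set (Fin 3)} {a b : Fin 3} (hab : a ≠ b)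
    (hS : a ∈ S ∧ b ∈ S) (hT : a ∈ T ∧ b ∈ T) (hST : S ≠ T) : S = Set.univ ↔ T ≠ Set.univ := by
  have eq_pair {U : Set (Fin 3)} (hU : a ∈ U ∧ b ∈ U) (hne : U ≠ Set.univ) : U = {a, b} := by
    obtain ⟨z, hz⟩ := (Set.ne_univ_iff_exists_notMem U).mp hne
    refine Set.Subset.antisymm (fun y hy ↦ ?_) (Set.insert_subset hU.1 (by simpa using hU.2))
    have pigeonhole : ∀ a b z y : Fin 3, a ≠ b → z ≠ a → z ≠ b → y ≠ z → y = a ∨ y = b := by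
      decide
    exact pigeonhole a b z y hab (fun h ↦ hz (h ▸ hU.1)) (fun h ↦ hz (h ▸ hU.2))
      (fun h ↦ hz (h ▸ hy))
  refine ⟨fun hSu hTu ↦ hST (hSu.trans hTu.symm), fun hTu ↦ ?_⟩
  by_contra hSu
  exact hST ((eq_pair hS hSu).trans (eq_pair hT hTu).symm)

lemma Fin.natCast_val_sub_of_dvd {N k : ℕ} [NeZero k] (h : k ∣ N) (x y : Fin N) :
    (((x - y : Fin N) : ℕ) : Fin k) = ((x : ℕ) : Fin k) - ((y : ℕ) : Fin k) := by
  have hmod (a : ℕ) : ((a % N : ℕ) : Fin k) = a := Fin.ext (by simp [Nat.mod_mod_of_dvd _ h])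
  rw [Fin.val_sub, hmod, Nat.cast_add, Nat.cast_sub y.is_lt.le, Fin.natCast_eq_zero.mpr h]
  ring

/-- The colours `p q r s` of four consecutive vertices of a cycle satisfy the lid condition on the
edge between the middle two. -/
abbrev IsLidWindow {α : Type*} [DecidableEq α] (p q r s : α) : Prop :=
  q ≠ r ∧ ({p, q, r} : Finset α) ≠ {q, r, s}

namespace SimpleGraph

variable {V W α : Type*} {G : SimpleGraph V} {H : SimpleGraph W}

lemma self_mem_closedNbhd (v : V) : v ∈ G.closedNbhd v := Set.mem_insert _ _

lemma Adj.mem_closedNbhd {v w : V} (h : G.Adj v w) : w ∈ G.closedNbhd v :=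
  Set.mem_insert_of_mem _ h

lemma closedNbhd_ne_of_adj_notMem {a b c : V} (hac : G.Adj a c) (hcb : c ∉ G.closedNbhd b) :
    G.closedNbhd a ≠ G.closedNbhd b :=
  fun h ↦ hcb (h ▸ hac.mem_closedNbhd)

lemma LidColorable.mono {j k : ℕ} (h : G.LidColorable j) (hjk : j ≤ k) : G.LidColorable k := by
  obtain ⟨f, hproper, hlid⟩ := h
  refine ⟨Fin.castLE hjk ∘ f, fun u w huw ↦ (Fin.castLE_injective hjk).ne (hproper huw),
    fun u w huw hne ↦ ?_⟩
  rw [Set.image_comp, Set.image_comp]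
  exact (Set.image_injective.mpr (Fin.castLE_injective hjk)).ne (hlid huw hne)

lemma lidChromaticNumber_eq_succ {k : ℕ} (h : G.LidColorable (k + 1)) (h' : ¬G.LidColorable k) :
    G.lidChromaticNumber = (k + 1 : ℕ) := by
  refine le_antisymm (iInf₂_le _ h) (le_iInf₂ fun j hj ↦ ?_)
  have hkj : k < j := by
    by_contra hjk
    exact h' (hj.mono (by omega))
  exact_mod_cast hkj

theorem not_lidColorable_three (hG : ∀ ⦃u w⦄, G.Adj u w → G.closedNbhd u ≠ G.closedNbhd w)
    (h2 : ¬G.Colorable 2) : ¬G.LidColorable 3 := by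
  rintro ⟨f, hproper, hlid⟩
  have hfull : ∀ ⦃u w⦄, G.Adj u w →
      (f '' G.closedNbhd u = Set.univ ↔ f '' G.closedNbhd w ≠ Set.univ) := fun u w huw ↦
    Fin.three_eq_univ_iff_ne_univ (hproper huw)
      ⟨Set.mem_image_of_mem f (self_mem_closedNbhd u),
        Set.mem_image_of_mem f huw.mem_closedNbhd⟩
      ⟨Set.mem_image_of_mem f huw.symm.mem_closedNbhd,
        Set.mem_image_of_mem f (self_mem_closedNbhd w)⟩
      (hlid huw (hG huw))
  have hc := (Coloring.mk (fun v ↦ (f '' G.closedNbhd v = Set.univ : Prop))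
    fun huw heq ↦ iff_not_self (heq ▸ hfull huw)).colorable
  rw [Fintype.card_prop] at hc
  exact h2 hc

lemma fst_image_closedNbhd_tensorProd (hH : ∀ y, ∃ y', H.Adj y y') (v : V × W) :
    Prod.fst '' (G.tensorProd H).closedNbhd v = G.closedNbhd v.1 := by
  ext a
  constructor
  · rintro ⟨p, hp | hp, rfl⟩
    · rw [hp]
      exact self_mem_closedNbhd _
    · exact hp.1.mem_closedNbhd
  · rintro (rfl | ha)
    · exact ⟨v, self_mem_closedNbhd _, rfl⟩
    · obtain ⟨y, hy⟩ := hH v.2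
      exact ⟨(a, y), Adj.mem_closedNbhd (G := G.tensorProd H) ⟨ha, hy⟩, rfl⟩

lemma IsLidColoring.tensorProd_fst {c : V → α} (hc : G.IsLidColoring c)
    (hG : ∀ ⦃a b⦄, G.Adj a b → G.closedNbhd a ≠ G.closedNbhd b) (hH : ∀ y, ∃ y', H.Adj y y') :
    (G.tensorProd H).IsLidColoring (c ∘ Prod.fst) := by
  refine ⟨fun u w huw ↦ hc.1 huw.1, fun u w huw _ ↦ ?_⟩
  rw [Set.image_comp, Set.image_comp, fst_image_closedNbhd_tensorProd hH,
    fst_image_closedNbhd_tensorProd hH]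
  exact hc.2 huw.1 (hG huw.1)

lemma tensorProd_closedNbhd_ne (hG : ∀ ⦃a b⦄, G.Adj a b → ∃ c, G.Adj a c ∧ c ∉ G.closedNbhd b)
    {u w : V × W} (huw : (G.tensorProd H).Adj u w) :
    (G.tensorProd H).closedNbhd u ≠ (G.tensorProd H).closedNbhd w := by
  obtain ⟨c, hac, hcb⟩ := hG huw.1
  refine closedNbhd_ne_of_adj_notMem (c := (c, w.2)) ⟨hac, huw.2⟩ ?_
  rintro (hcw | hcw)
  · exact hcb (congrArg Prod.fst hcw ▸ self_mem_closedNbhd _)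
  · exact hcb hcw.1.mem_closedNbhd

lemma cycleGraph_closedNbhd {n : ℕ} (v : Fin (n + 2)) :
    (cycleGraph (n + 2)).closedNbhd v = {v - 1, v, v + 1} := by
  rw [closedNbhd, cycleGraph_neighborSet, Set.insert_comm]

lemma cycleGraph_adj_add_one {n : ℕ} (v : Fin (n + 2)) : (cycleGraph (n + 2)).Adj v (v + 1) :=
  cycleGraph_adj.mpr (Or.inr (add_sub_cancel_left v 1))

lemma cycleGraph_exists_adj_notMem_closedNbhd {n : ℕ} (hn : 4 ≤ n) {a b : Fin n}
    (hab : (cycleGraph n).Adj a b) :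
    ∃ c, (cycleGraph n).Adj a c ∧ c ∉ (cycleGraph n).closedNbhd b := by
  obtain ⟨k, rfl⟩ : ∃ k, n = k + 2 := ⟨n - 2, by omega⟩
  have h1 : (1 : Fin (k + 2)) ≠ 0 := by simp
  have h2 : (2 : Fin (k + 2)) ≠ 0 := by
    simp [Fin.ext_iff, Nat.mod_eq_of_lt (show 2 < k + 2 by omega)]
  have h3 : (3 : Fin (k + 2)) ≠ 0 := by
    simp [Fin.ext_iff, Nat.mod_eq_of_lt (show 3 < k + 2 by omega)]
  refine ⟨a + (a - b), ?_, ?_⟩ <;> rw [cycleGraph_adj] at hab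
  · rw [cycleGraph_adj]
    rcases hab with h | h
    · exact Or.inr (by rw [add_sub_cancel_left, h])
    · exact Or.inl (by linear_combination h)
  · simp only [cycleGraph_closedNbhd, Set.mem_insert_iff, Set.mem_singleton_iff]
    -- `a + (a - b) - b = 2 (a - b) = ±2` is none of `-1, 0, 1` since `4 ≤ n`
    rcases hab with h | h <;> rintro (h' | h' | h')
    exacts [h3 (by linear_combination h' - 2 * h), h2 (by linear_combination h' - 2 * h),
      h1 (by linear_combination h' - 2 * h), h1 (by linear_combination -h' - 2 * h),
      h2 (by linear_combination -h' - 2 * h), h3 (by linear_combination -h' - 2 * h)]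

lemma cycleGraph_closedNbhd_ne {n : ℕ} (hn : 4 ≤ n) {a b : Fin n} (hab : (cycleGraph n).Adj a b) :
    (cycleGraph n).closedNbhd a ≠ (cycleGraph n).closedNbhd b :=
  let ⟨_, hac, hcb⟩ := cycleGraph_exists_adj_notMem_closedNbhd hn hab
  closedNbhd_ne_of_adj_notMem hac hcb

def cycleGraph.homOfDvd {N k : ℕ} (h : k + 2 ∣ N) : cycleGraph N →g cycleGraph (k + 2) where
  toFun x := (x : ℕ)
  map_rel' {x y} hxy := by
    rw [cycleGraph_adj'] at hxy
    rw [cycleGraph_adj, ← Fin.natCast_val_sub_of_dvd h, ← Fin.natCast_val_sub_of_dvd h]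
    rcases hxy with hxy | hxy <;> simp [hxy]

lemma cycleGraph_tensorProd_not_colorable_two {m n : ℕ} (hm : Odd m) (hn : Odd n) (hm1 : 1 < m)
    (hn1 : 1 < n) : ¬((cycleGraph m).tensorProd (cycleGraph n)).Colorable 2 := by
  obtain ⟨a, rfl⟩ : ∃ a, m = a + 2 := ⟨m - 2, by omega⟩
  obtain ⟨b, rfl⟩ : ∃ b, n = b + 2 := ⟨n - 2, by omega⟩
  let diagonal : cycleGraph ((a + 2) * (b + 2)) →g
      (cycleGraph (a + 2)).tensorProd (cycleGraph (b + 2)) :=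
    { toFun x := (cycleGraph.homOfDvd (dvd_mul_right _ _) x,
        cycleGraph.homOfDvd (dvd_mul_left _ _) x)
      map_rel' h := ⟨(cycleGraph.homOfDvd _).map_adj h, (cycleGraph.homOfDvd _).map_adj h⟩ }
  intro h2
  have hle := (h2.of_hom diagonal).chromaticNumber_le
  rw [chromaticNumber_cycleGraph_of_odd _ (by nlinarith) (hm.mul hn)] at hle
  norm_num at hle

lemma cycleGraph_isLidColoring_of_periodic [DecidableEq α] {m : ℕ} (hm : 2 ≤ m) {s : ℕ → α}
    (hs : Function.Periodic s m)
    (hW : ∀ j, IsLidWindow (s j) (s (j + 1)) (s (j + 2)) (s (j + 3))) :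
    (cycleGraph m).IsLidColoring fun x ↦ s x := by
  obtain ⟨n, rfl⟩ : ∃ n, m = n + 2 := ⟨m - 2, by omega⟩
  have hedge (x : Fin (n + 2)) : s x ≠ s ↑(x + 1) ∧
      (fun y : Fin (n + 2) ↦ s y) '' (cycleGraph (n + 2)).closedNbhd x ≠
        (fun y : Fin (n + 2) ↦ s y) '' (cycleGraph (n + 2)).closedNbhd (x + 1) := by
    have hzero : (n : Fin (n + 2)) + 2 = 0 := by exact_mod_cast Fin.natCast_self (n + 2)
    have hwin (j : ℕ) (y : Fin (n + 2)) (hy : y = x + ((n + 1 + j : ℕ) : Fin (n + 2))) :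
        s y = s (x + (n + 1) + j) := by
      rw [hy, Fin.val_add, Fin.val_natCast, hs.map_mod_nat, ← hs.map_mod_nat, Nat.add_mod_mod,
        hs.map_mod_nat, ← add_assoc]
    -- the edge `x ~ x + 1` is read off the window of `s` starting at `x - 1 ≡ x + n + 1`
    obtain ⟨hne, hsets⟩ := hW (x + (n + 1))
    simp only [cycleGraph_closedNbhd, Set.image_insert_eq, Set.image_singleton,
      add_sub_cancel_right]
    rw [hwin 3 (x + 1 + 1) (by push_cast; linear_combination -hzero),
      hwin 2 (x + 1) (by push_cast; linear_combination -hzero),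
      hwin 0 (x - 1) (by push_cast; linear_combination -hzero),
      hwin 1 x (by push_cast; linear_combination -hzero), add_zero]
    exact ⟨hne, fun h ↦ hsets (by rw [← Finset.coe_inj]; push_cast; exact h)⟩
  refine ⟨fun x y hxy ↦ ?_, fun x y hxy _ ↦ ?_⟩ <;>
  rcases cycleGraph_adj.mp hxy with h | h <;> rw [sub_eq_iff_eq_add'] at h <;> subst h
  exacts [(hedge y).1.symm, (hedge x).1, (hedge y).2.symm, (hedge x).2]

end SimpleGraph

abbrev IsLidWord (L : List (Fin 4)) : Prop :=
  ∀ e < L.length - 3,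
    IsLidWindow (L.getD e 0) (L.getD (e + 1) 0) (L.getD (e + 2) 0) (L.getD (e + 3) 0)

def lidSeq (k : ℕ) (t : List (Fin 4)) (j : ℕ) : Fin 4 :=
  let i := j % (4 * k + t.length)
  if i < 4 * k then [0, 1, 0, 2].getD (i % 4) 0 else t.getD (i - 4 * k) 0

namespace lidSeq

/-- The colours of `lidSeq k t` from three steps before the tail `t` to three steps after it,
where the sequence has wrapped around to its start. -/
def border (t : List (Fin 4)) : List (Fin 4) := [1, 0, 2] ++ t ++ [0, 1, 0]

variable {k : ℕ} {t : List (Fin 4)}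

lemma periodic (k : ℕ) (t : List (Fin 4)) :
    Function.Periodic (lidSeq k t) (4 * k + t.length) := by
  intro j
  simp only [lidSeq, Nat.add_mod_right]

lemma eq_of_lt {i : ℕ} (hi : i < 4 * k) : lidSeq k t i = [0, 1, 0, 2].getD (i % 4) 0 := by
  simp only [lidSeq, Nat.mod_eq_of_lt (show i < 4 * k + t.length by omega), if_pos hi]

lemma eq_border_getD (hk : 1 ≤ k) {e : ℕ} (he : e < t.length + 6) :
    lidSeq k t (4 * k - 3 + e) = (border t).getD e 0 := by
  rcases Nat.lt_or_ge e 3 with h3 | h3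
  · rw [eq_of_lt (by omega), show (4 * k - 3 + e) % 4 = e + 1 by omega]
    interval_cases e <;> rfl
  rcases Nat.lt_or_ge e (t.length + 3) with ht | ht
  · have hmod : (4 * k - 3 + e) % (4 * k + t.length) = 4 * k - 3 + e :=
      Nat.mod_eq_of_lt (by omega)
    simp only [lidSeq, hmod, if_neg (show ¬4 * k - 3 + e < 4 * k by omega), border]
    rw [List.getD_append _ _ _ _ (by simp; omega), List.getD_append_right _ _ _ _ (by simp; omega)]
    congr 1
    simp only [List.length_cons, List.length_nil]
    omega
  · obtain ⟨r, hr, rfl⟩ : ∃ r < 3, e = t.length + 3 + r := ⟨e - (t.length + 3), by omega, by omega⟩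
    rw [show 4 * k - 3 + (t.length + 3 + r) = r + (4 * k + t.length) by omega, periodic k t r,
      eq_of_lt (by omega), border, List.getD_append_right _ _ _ _ (by simp)]
    simp only [List.length_append, List.length_cons, List.length_nil]
    rw [show t.length + 3 + r - (3 + t.length) = r by omega]
    interval_cases r <;> rfl

lemma isLidWindow (hk : 1 ≤ k) (ht : IsLidWord (border t)) (j : ℕ) :
    IsLidWindow (lidSeq k t j) (lidSeq k t (j + 1)) (lidSeq k t (j + 2)) (lidSeq k t (j + 3)) := by
  have hper := periodic k t
  have hred (a : ℕ) : lidSeq k t (j + a) = lidSeq k t (j % (4 * k + t.length) + a) := by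
    rw [← hper.map_mod_nat, ← hper.map_mod_nat (_ + a), Nat.mod_add_mod]
  rw [← hper.map_mod_nat j, hred, hred, hred]
  have hi : j % (4 * k + t.length) < 4 * k + t.length := Nat.mod_lt _ (by omega)
  generalize j % (4 * k + t.length) = i at hi ⊢
  rcases Nat.lt_or_ge (i + 3) (4 * k) with h | h
  · have pattern : ∀ r < 4, IsLidWindow (([0, 1, 0, 2] : List (Fin 4)).getD r 0)
        ([0, 1, 0, 2].getD ((r + 1) % 4) 0) ([0, 1, 0, 2].getD ((r + 2) % 4) 0)
        ([0, 1, 0, 2].getD ((r + 3) % 4) 0) := by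
      decide
    rw [eq_of_lt (by omega), eq_of_lt (by omega), eq_of_lt (by omega), eq_of_lt (by omega),
      show (i + 1) % 4 = (i % 4 + 1) % 4 by omega, show (i + 2) % 4 = (i % 4 + 2) % 4 by omega,
      show (i + 3) % 4 = (i % 4 + 3) % 4 by omega]
    exact pattern (i % 4) (Nat.mod_lt _ (by norm_num))
  · obtain ⟨e, rfl⟩ : ∃ e, i = 4 * k - 3 + e := ⟨i - (4 * k - 3), by omega⟩
    simp only [add_assoc]
    rw [eq_border_getD hk (by omega), eq_border_getD hk (by omega), eq_border_getD hk (by omega),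
      eq_border_getD hk (by omega)]
    exact ht e (by simp [border]; omega)

end lidSeq

lemma cycleGraph_lidColorable_four_of_isLidWord {m k : ℕ} (hk : 1 ≤ k) {t : List (Fin 4)}
    (hm : 4 * k + t.length = m) (ht : IsLidWord (lidSeq.border t)) :
    (cycleGraph m).LidColorable 4 :=
  hm ▸ ⟨_, cycleGraph_isLidColoring_of_periodic (by omega) (lidSeq.periodic k t)
    (lidSeq.isLidWindow hk ht)⟩

theorem cycleGraph_lidColorable_four {m : ℕ} (hm : Odd m) (h9 : 9 ≤ m) :
    (cycleGraph m).LidColorable 4 := by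
  obtain ⟨j, rfl⟩ := hm
  rcases Nat.even_or_odd j with ⟨l, rfl⟩ | ⟨l, rfl⟩
  · exact cycleGraph_lidColorable_four_of_isLidWord (k := l - 1) (t := [0, 1, 3, 2, 3])
      (by omega) (by simp; omega) (by decide)
  · exact cycleGraph_lidColorable_four_of_isLidWord (k := l - 1) (t := [0, 1, 3, 1, 2, 0, 3])
      (by omega) (by simp; omega) (by decide)

/-- For odd `m ≥ 9` and odd `n ≥ 3`, `χ_lid(C_m × C_n) = 4`. -/
theorem lid_stmt_18 (m n : ℕ) (hm : Odd m) (hn : Odd n) (hm9 : 9 ≤ m) (hn3 : 3 ≤ n) :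
    ((cycleGraph m).tensorProd (cycleGraph n)).lidChromaticNumber = 4 := by
  obtain ⟨b, rfl⟩ : ∃ b, n = b + 2 := ⟨n - 2, by omega⟩
  obtain ⟨c, hc⟩ := cycleGraph_lidColorable_four hm hm9
  have h4 : ((cycleGraph m).tensorProd (cycleGraph (b + 2))).LidColorable 4 :=
    ⟨c ∘ Prod.fst, hc.tensorProd_fst (fun _ _ ↦ cycleGraph_closedNbhd_ne (by omega))
      fun y ↦ ⟨y + 1, cycleGraph_adj_add_one y⟩⟩
  have h3 : ¬((cycleGraph m).tensorProd (cycleGraph (b + 2))).LidColorable 3 :=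
    not_lidColorable_three (fun _ _ ↦ tensorProd_closedNbhd_ne
        fun _ _ ↦ cycleGraph_exists_adj_notMem_closedNbhd (by omega))
      (cycleGraph_tensorProd_not_colorable_two hm hn (by omega) (by omega))
  exact lidChromaticNumber_eq_succ h4 h3
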